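/- Let ϑₙ = π(2⁻¹ + 2⁻² + ⋯ + 2⁻ⁿ) = π(1 − 2⁻ⁿ), ζₙ = e^{iϑₙ}, and uₙ(z) = Re((ζₙ + z)/(ζₙ − z)) for n ≥ 1. Let Θ ∈ (0, 2π) with Θ ≠ π and Θ ≠ ϑₙ for all n ≥ 1, and let c > 0. Then there exist a constant C < ∞ and r₀ ∈ (0, 1) such that for every n ≥ 1, every r ∈ (r₀, 1), and every ϑ with |ϑ − Θ| < c(1 − r), one has uₙ(r e^{iϑ}) ≤ C(1 − r); moreover C does not depend on n. -/

import Mathlib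

open Complex MeasureTheory Filter Set

noncomputable section

/-- `ϑₙ = π(2⁻¹ + ⋯ + 2⁻⁽ⁿ⁺¹⁾) = π(1 - 2⁻⁽ⁿ⁺¹⁾)` (indexing from `n = 0`, so this is the
paper's `ϑ_{n+1}`). -/
def theta (n : ℕ) : ℝ := Real.pi * (1 - (1 / 2 : ℝ) ^ (n + 1))

def zeta (n : ℕ) : ℂ := Complex.exp (theta n * Complex.I)

/-- The Poisson kernel with pole `ζₙ`. -/
def uP (n : ℕ) (z : ℂ) : ℝ := ((zeta n + z) / (zeta n - z)).re

/-!
The poles `ζₙ` stay a fixed distance `δ > 0` away from `e^{iΘ}`: none of them equals it, and they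
converge to `-1 ≠ e^{iΘ}`. A point `z = r e^{iϑ}` of the sector lies within `(1 + |c|)(1 - r)` of
`e^{iΘ}`, hence at distance at least `δ / 2` from every pole once `r` is close to `1`, and then
`uₙ(z) = (1 - |z|²) / |ζₙ - z|² ≤ 8 (1 - r) / δ²`.
-/

open Metric Topology Real

namespace Complex

theorem re_add_div_sub_of_norm_eq_one {ζ : ℂ} (hζ : ‖ζ‖ = 1) (z : ℂ) :
    ((ζ + z) / (ζ - z)).re = (1 - ‖z‖ ^ 2) / ‖ζ - z‖ ^ 2 := by
  have h1 : normSq ζ = 1 := by rw [normSq_eq_norm_sq, hζ, one_pow]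
  rw [div_re, ← add_div, ← normSq_eq_norm_sq, ← normSq_eq_norm_sq, ← h1]
  congr 1
  simp only [normSq_apply, add_re, add_im, sub_re, sub_im]
  ring

theorem re_add_div_sub_le {ζ z : ℂ} {δ : ℝ} (hζ : ‖ζ‖ = 1) (hz : ‖z‖ ≤ 1) (hδ : 0 < δ)
    (hδz : δ ≤ ‖ζ - z‖) : ((ζ + z) / (ζ - z)).re ≤ 2 / δ ^ 2 * (1 - ‖z‖) := by
  rw [re_add_div_sub_of_norm_eq_one hζ]
  calc (1 - ‖z‖ ^ 2) / ‖ζ - z‖ ^ 2 ≤ 2 * (1 - ‖z‖) / δ ^ 2 := by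
        gcongr
        nlinarith [norm_nonneg z]
    _ = 2 / δ ^ 2 * (1 - ‖z‖) := by ring

theorem norm_exp_mul_I_sub_exp_mul_I_le (a b : ℝ) :
    ‖exp (a * I) - exp (b * I)‖ ≤ |a - b| := by
  have h : exp (a * I) - exp (b * I) = exp (b * I) * (exp (I * ↑(a - b)) - 1) := by
    rw [mul_sub, mul_one, ← exp_add]; push_cast; ring_nf
  rw [h, norm_mul, norm_exp_ofReal_mul_I, one_mul, ← Real.norm_eq_abs]
  exact norm_exp_I_mul_ofReal_sub_one_le

theorem norm_ofReal_mul_exp_mul_I_sub_le (r ϑ Θ : ℝ) :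
    ‖r * exp (ϑ * I) - exp (Θ * I)‖ ≤ |1 - r| + |ϑ - Θ| := by
  have h : r * exp (ϑ * I) - exp (Θ * I) =
      -(((1 - r : ℝ) : ℂ) * exp (ϑ * I)) + (exp (ϑ * I) - exp (Θ * I)) := by
    push_cast; ring
  rw [h]
  refine (norm_add_le _ _).trans (add_le_add ?_ (norm_exp_mul_I_sub_exp_mul_I_le ϑ Θ))
  rw [norm_neg, norm_mul, norm_exp_ofReal_mul_I, mul_one, norm_real, Real.norm_eq_abs]

theorem eq_of_exp_mul_I_eq {a b : ℝ} (h : |a - b| < 2 * π) (he : exp (a * I) = exp (b * I)) :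
    a = b :=
  eq_of_circleMap_eq (c := 0) one_ne_zero h (by simpa [circleMap] using he)

end Complex

theorem Filter.Tendsto.exists_pos_le_dist {X : Type*} [MetricSpace X] {u : ℕ → X} {a x : X}
    (hu : Tendsto u atTop (𝓝 a)) (hax : a ≠ x) (hux : ∀ n, u n ≠ x) :
    ∃ δ > 0, ∀ n, δ ≤ dist x (u n) := by
  have hK := hu.isCompact_insert_range
  have hx : x ∉ insert a (range u) := by
    rintro (rfl | ⟨n, rfl⟩)
    exacts [hax rfl, hux n rfl]
  refine ⟨infDist x (insert a (range u)),
    (hK.isClosed.notMem_iff_infDist_pos (insert_nonempty _ _)).1 hx, fun n => ?_⟩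
  exact infDist_le_dist_of_mem (mem_insert_of_mem _ (mem_range_self n))

theorem theta_mem_Ioo (n : ℕ) : theta n ∈ Ioo 0 π := by
  have h0 : (0 : ℝ) < (1 / 2) ^ (n + 1) := by positivity
  have h1 : (1 / 2 : ℝ) ^ (n + 1) < 1 := pow_lt_one₀ (by norm_num) (by norm_num) n.succ_ne_zero
  constructor <;> unfold theta <;> nlinarith [pi_pos]

theorem tendsto_theta : Tendsto theta atTop (𝓝 π) := by
  have h : Tendsto (fun n : ℕ => (1 / 2 : ℝ) ^ (n + 1)) atTop (𝓝 0) :=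
    (tendsto_pow_atTop_nhds_zero_of_lt_one (by norm_num) (by norm_num)).comp
      (tendsto_add_atTop_nat 1)
  have := (tendsto_const_nhds (x := (1 : ℝ)) |>.sub h).const_mul π
  rwa [sub_zero, mul_one] at this

theorem tendsto_zeta : Tendsto zeta atTop (𝓝 (-1)) := by
  rw [← exp_pi_mul_I]
  exact ((continuous_ofReal.mul continuous_const).cexp.tendsto π).comp tendsto_theta

theorem norm_zeta (n : ℕ) : ‖zeta n‖ = 1 :=
  norm_exp_ofReal_mul_I _

theorem exists_pos_le_norm_zeta_sub {Θ : ℝ} (hΘ0 : 0 < Θ) (hΘ2 : Θ < 2 * π) (hΘπ : Θ ≠ π)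
    (hΘn : ∀ n, Θ ≠ theta n) : ∃ δ > 0, ∀ n, δ ≤ ‖zeta n - exp (Θ * I)‖ := by
  have hπ : (-1 : ℂ) ≠ exp (Θ * I) := fun h => hΘπ <| Eq.symm <|
    eq_of_exp_mul_I_eq (by rw [abs_lt]; constructor <;> linarith [pi_pos])
      (exp_pi_mul_I.trans h)
  have hn : ∀ n, zeta n ≠ exp (Θ * I) := fun n h => hΘn n <| Eq.symm <| by
    obtain ⟨h0, h1⟩ := theta_mem_Ioo n
    exact eq_of_exp_mul_I_eq (by rw [abs_lt]; constructor <;> linarith) h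
  obtain ⟨δ, hδ, hle⟩ := tendsto_zeta.exists_pos_le_dist hπ hn
  exact ⟨δ, hδ, fun n => by simpa [dist_eq_norm', norm_sub_rev] using hle n⟩

theorem uniform_sector_estimate_general (Θ : ℝ) (hΘ0 : 0 < Θ) (hΘ2 : Θ < 2 * Real.pi)
    (hΘπ : Θ ≠ Real.pi) (hΘn : ∀ n : ℕ, Θ ≠ theta n) (c : ℝ) :
    ∃ C : ℝ, ∃ r₀ : ℝ, r₀ ∈ Set.Ioo (0 : ℝ) 1 ∧
      ∀ n : ℕ, ∀ r : ℝ, r ∈ Set.Ioo r₀ 1 → ∀ ϑ : ℝ, |ϑ - Θ| < c * (1 - r) →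
        uP n ((r : ℂ) * Complex.exp (ϑ * Complex.I)) ≤ C * (1 - r) := by
  obtain ⟨δ, hδ, hsep⟩ := exists_pos_le_norm_zeta_sub hΘ0 hΘ2 hΘπ hΘn
  have hε : 0 < δ / (2 * (|c| + 1)) := by positivity
  refine ⟨2 / (δ / 2) ^ 2, max (1 / 2) (1 - δ / (2 * (|c| + 1))),
    ⟨by positivity, max_lt (by norm_num) (by linarith)⟩, ?_⟩
  rintro n r ⟨hr₀, hr₁⟩ ϑ hϑ
  have hr : 0 < r := lt_of_le_of_lt (by positivity) hr₀
  have hz : ‖(r : ℂ) * exp (ϑ * I)‖ = r := by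
    rw [norm_mul, norm_exp_ofReal_mul_I, mul_one, norm_real, Real.norm_of_nonneg hr.le]
  have hnear : ‖(r : ℂ) * exp (ϑ * I) - exp (Θ * I)‖ ≤ δ / 2 := by
    have hcr : c * (1 - r) ≤ |c| * (1 - r) := 
      mul_le_mul_of_nonneg_right (le_abs_self c) (by linarith)
    have hrε : (|c| + 1) * (1 - r) ≤ δ / 2 := by
      have := (le_max_right _ _).trans_lt hr₀
      rw [sub_lt_comm, lt_div_iff₀ (by positivity)] at this
      nlinarith
    calc _ ≤ |1 - r| + |ϑ - Θ| := norm_ofReal_mul_exp_mul_I_sub_le r ϑ Θ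
      _ ≤ δ / 2 := by rw [abs_of_pos (by linarith)]; linarith
  have hfar : δ / 2 ≤ ‖zeta n - r * exp (ϑ * I)‖ := by
    linarith [hsep n, norm_sub_le_norm_sub_add_norm_sub (zeta n) (r * exp (ϑ * I)) (exp (Θ * I))]
  simpa only [uP, hz] using re_add_div_sub_le (norm_zeta n) (hz.trans_le hr₁.le) (half_pos hδ) hfar

/-- Uniform Stolz-sector estimate: if `Θ ∈ (0, 2π)`, `Θ ≠ π` and `Θ ≠ ϑₙ` for all `n`,
then for every `c > 0` there are `C < ∞` and `r₀ ∈ (0,1)` such that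
`uₙ(r e^{iϑ}) ≤ C (1 - r)` for all `n`, all `r ∈ (r₀, 1)`, and all `ϑ` with
`|ϑ - Θ| < c (1 - r)`; the constant `C` does not depend on `n`. -/
theorem uniform_sector_estimate (Θ : ℝ) (hΘ0 : 0 < Θ) (hΘ2 : Θ < 2 * Real.pi)
    (hΘπ : Θ ≠ Real.pi) (hΘn : ∀ n : ℕ, Θ ≠ theta n) (c : ℝ) (hc : 0 < c) :
    ∃ C : ℝ, ∃ r₀ : ℝ, r₀ ∈ Set.Ioo (0 : ℝ) 1 ∧
      ∀ n : ℕ, ∀ r : ℝ, r ∈ Set.Ioo r₀ 1 → ∀ ϑ : ℝ, |ϑ - Θ| < c * (1 - r) →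
        uP n ((r : ℂ) * Complex.exp (ϑ * Complex.I)) ≤ C * (1 - r) :=
  uniform_sector_estimate_general Θ hΘ0 hΘ2 hΘπ hΘn c

end
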